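/- arXiv:2604.02267 — 2 statements merged into one kernel-verified Lean document; each statement's English description precedes it below -/
import Mathlib

section
/- Let S=(1,s_2,s_3,...) be a packing sequence and let n be a positive integer. If 2^{i−1} ≤ s_i < 2^i holds for every index i with 2 ≤ i ≤ ⌊log_2 n⌋ + 1, then χ_S(P_n) = ⌊log_2 n⌋ + 1. -/
/-!
Upper bound: give vertex `v` (counted from `1`) the color `ν₂(v) + 1`. Two vertices with the same
value `ν₂ = i` are `2^i a` and `2^i b` with `a`, `b` odd, so they are at distance at least `2^(i+1)`,
which exceeds `s_{i+1} < 2^(i+1)`.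

Lower bound: if `s_j ≥ 2^(j-1)` for the first `k` colors, every `2^k` consecutive vertices contain
a color beyond the first `k`. Inductively, the first half of the window contains color `k` at
some `x`, and so do the `2^(k-1)` vertices following `x`; these two occurrences are at distance
at most `2^(k-1) ≤ s_k`. Hence `k` colors force `n < 2^k`.
-/

open SimpleGraph

/-- `IsSPackingColoring G s φ` : `φ` is an `S`-packing coloring of `G` with colors
`Fin k`, where the value `s i` represents the entry `s_{i+1}` of the packing
sequence `S = (s_1, s_2, …)` (0-indexed encoding), and the color `j : Fin k`
represents color `j+1`: two distinct vertices sharing a color `i` (1-indexed)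
must be at distance greater than `s_i`. -/
def IsSPackingColoring {V : Type*} (G : SimpleGraph V) (s : ℕ → ℕ) {k : ℕ}
    (φ : V → Fin k) : Prop :=
  ∀ u v : V, u ≠ v → φ u = φ v → (s (φ u) : ℕ∞) < G.edist u v

/-- The `S`-packing chromatic number of `G`: the least `k` admitting an
`S`-packing `k`-coloring. -/
noncomputable def SPackingChromatic {V : Type*} (G : SimpleGraph V) (s : ℕ → ℕ) : ℕ :=
  sInf {k | ∃ φ : V → Fin k, IsSPackingColoring G s φ}

/-- `G` is `χ_S`-critical: every proper subgraph has a strictly smaller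
`S`-packing chromatic number. -/
def SCritical {V : Type*} (G : SimpleGraph V) (s : ℕ → ℕ) : Prop :=
  ∀ H : G.Subgraph, H ≠ ⊤ → SPackingChromatic H.coe s < SPackingChromatic G s

/-- `G` is `χ_S`-vertex-critical: deleting any vertex strictly decreases the
`S`-packing chromatic number. -/
def SVertexCritical {V : Type*} (G : SimpleGraph V) (s : ℕ → ℕ) : Prop :=
  ∀ v : V, SPackingChromatic (G.induce {u | u ≠ v}) s < SPackingChromatic G s

namespace SimpleGraph

theorem Walk.val_le_val_add_length_pathGraph {n : ℕ} {u v : Fin n}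
    (p : (pathGraph n).Walk u v) : (v : ℕ) ≤ u + p.length ∧ (u : ℕ) ≤ v + p.length := by
  induction p with
  | nil => simp
  | cons hadj _ ih =>
    rw [pathGraph_adj] at hadj
    rw [Walk.length_cons]
    omega

theorem pathGraph_edist_le {n : ℕ} (u : Fin n) (d : ℕ) (hd : u + d < n) :
    (pathGraph n).edist u ⟨u + d, hd⟩ ≤ d := by
  induction d with
  | zero => simp
  | succ d ih =>
    have hadj : (pathGraph n).Adj ⟨u + d, by omega⟩ ⟨u + (d + 1), hd⟩ :=
      pathGraph_adj.mpr (.inl (Nat.add_assoc _ _ _))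
    calc (pathGraph n).edist u ⟨u + (d + 1), hd⟩
        ≤ (pathGraph n).edist u ⟨u + d, by omega⟩
          + (pathGraph n).edist ⟨u + d, by omega⟩ ⟨u + (d + 1), hd⟩ :=
          SimpleGraph.edist_triangle
      _ ≤ d + 1 := add_le_add (ih _) (edist_eq_one_iff_adj.mpr hadj).le
      _ = (d + 1 : ℕ) := by push_cast; rfl

theorem pathGraph_edist_of_le {n : ℕ} {u v : Fin n} (h : u ≤ v) :
    (pathGraph n).edist u v = (v - u : ℕ) := by
  refine le_antisymm ?_ ?_
  · have hv : v = ⟨u + (v - u : ℕ), by omega⟩ := Fin.ext (by simp only; omega)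
    conv_lhs => rw [hv]
    exact pathGraph_edist_le u _ _
  · obtain ⟨p, hp⟩ := exists_walk_of_edist_ne_top
      (edist_ne_top_iff_reachable.mpr (pathGraph_preconnected n u v))
    rw [← hp]
    have := p.val_le_val_add_length_pathGraph
    exact_mod_cast (by omega : (v - u : ℕ) ≤ p.length)

end SimpleGraph

theorem isSPackingColoring_pathGraph_iff {s : ℕ → ℕ} {n k : ℕ} {φ : Fin n → Fin k} :
    IsSPackingColoring (pathGraph n) s φ ↔
      ∀ u v : Fin n, u < v → φ u = φ v → s (φ u) < v - u := by
  have hlt {u v : Fin n} (huv : u < v) :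
      (s (φ u) : ℕ∞) < (pathGraph n).edist u v ↔ s (φ u) < v - u := by
    rw [pathGraph_edist_of_le huv.le]; exact Nat.cast_lt
  refine ⟨fun hφ u v huv heq => (hlt huv).mp (hφ u v huv.ne heq), fun hφ u v hne heq => ?_⟩
  rcases hne.lt_or_gt with huv | hvu
  · exact (hlt huv).mpr (hφ u v huv heq)
  · rw [edist_comm, heq]
    exact (hlt hvu).mpr (hφ v u hvu heq.symm)

theorem two_pow_succ_le_sub_of_factorization_eq {a b i : ℕ} (ha : a ≠ 0) (hab : a < b)
    (hai : a.factorization 2 = i) (hbi : b.factorization 2 = i) : 2 ^ (i + 1) ≤ b - a := by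
  have hodd {m : ℕ} (hm : m ≠ 0) : Odd (ordCompl[2] m) :=
    Nat.not_even_iff_odd.mp fun h => Nat.not_dvd_ordCompl Nat.prime_two hm h.two_dvd
  have hsplit (m : ℕ) (hmi : m.factorization 2 = i) : 2 ^ i * ordCompl[2] m = m := by
    simpa [hmi] using Nat.ordProj_mul_ordCompl_eq_self m 2
  set a' := ordCompl[2] a
  set b' := ordCompl[2] b
  have hdiff : b - a = 2 ^ i * (b' - a') := by
    rw [Nat.mul_sub, hsplit a hai, hsplit b hbi]
  have hlt : a' < b' := by
    by_contra! hle
    have := Nat.mul_le_mul_left (2 ^ i) hle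
    rw [hsplit a hai, hsplit b hbi] at this
    omega
  -- two distinct odd numbers differ by at least 2
  obtain ⟨c, hc⟩ := Nat.Odd.sub_odd (hodd (by omega : b ≠ 0)) (hodd ha)
  rw [hdiff, pow_succ]
  exact Nat.mul_le_mul_left _ (by omega)

theorem factorization_two_le_log {n v : ℕ} (hv : v ≠ 0) (hvn : v ≤ n) :
    v.factorization 2 ≤ Nat.log 2 n :=
  Nat.le_log_of_pow_le one_lt_two ((Nat.ordProj_le 2 hv).trans hvn)

def twoAdicColoring (n : ℕ) (v : Fin n) : Fin (Nat.log 2 n + 1) :=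
  ⟨((v : ℕ) + 1).factorization 2, Nat.lt_succ_of_le (factorization_two_le_log (by omega) v.isLt)⟩

theorem isSPackingColoring_twoAdicColoring {s : ℕ → ℕ} {n : ℕ}
    (hs : ∀ i ≤ Nat.log 2 n, s i < 2 ^ (i + 1)) :
    IsSPackingColoring (pathGraph n) s (twoAdicColoring n) := by
  refine isSPackingColoring_pathGraph_iff.mpr fun u v huv heq => ?_
  have hgap := two_pow_succ_le_sub_of_factorization_eq (a := u + 1) (b := v + 1) (by omega)
    (by simpa using huv) rfl (congrArg Fin.val heq).symm
  have := hs _ (Nat.lt_succ_iff.mp (twoAdicColoring n u).isLt)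
  simp only [twoAdicColoring] at this ⊢
  omega

def IsPackingOn (s φ : ℕ → ℕ) (I : Set ℕ) : Prop :=
  ∀ x ∈ I, ∀ y ∈ I, x < y → φ x = φ y → s (φ x) < y - x

theorem IsPackingOn.mono {s φ : ℕ → ℕ} {I J : Set ℕ} (hφ : IsPackingOn s φ J) (hIJ : I ⊆ J) :
    IsPackingOn s φ I :=
  fun x hx y hy => hφ x (hIJ hx) y (hIJ hy)

theorem IsPackingOn.exists_le_of_Ico_two_pow {s φ : ℕ → ℕ} {k : ℕ} (hs : ∀ j < k, 2 ^ j ≤ s j)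
    {a : ℕ} (hφ : IsPackingOn s φ (Set.Ico a (a + 2 ^ k))) :
    ∃ x ∈ Set.Ico a (a + 2 ^ k), k ≤ φ x := by
  induction k generalizing a with
  | zero => exact ⟨a, by simp, Nat.zero_le _⟩
  | succ k ih =>
    have ih' := @ih fun j hj => hs j (by omega)
    have hsk := hs k (by omega)
    rw [pow_succ, mul_two] at hφ ⊢
    generalize 2 ^ k = m at ih' hsk hφ ⊢
    -- color `k` occurs in the first half, and again within `m = 2 ^ k` steps after that
    obtain ⟨x, ⟨hax, hxa⟩, hkx⟩ := ih' (hφ.mono (Set.Ico_subset_Ico_right (by omega)))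
    obtain ⟨y, ⟨hxy, hya⟩, hky⟩ :=
      ih' (a := x + 1) (hφ.mono (Set.Ico_subset_Ico (by omega) (by omega)))
    by_contra! hlt
    have hxk : φ x = k := by have := hlt x ⟨hax, by omega⟩; omega
    have hyk : φ y = k := by have := hlt y ⟨by omega, by omega⟩; omega
    have hsep := hφ x ⟨hax, by omega⟩ y ⟨by omega, by omega⟩ (by omega) (hxk.trans hyk.symm)
    rw [hxk] at hsep
    omega

theorem IsSPackingColoring.lt_two_pow_of_pathGraph {s : ℕ → ℕ} {n k : ℕ}
    (hs : ∀ j < k, 2 ^ j ≤ s j) {φ : Fin n → Fin k}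
    (hφ : IsSPackingColoring (pathGraph n) s φ) : n < 2 ^ k := by
  by_contra! hn
  let ψ : ℕ → ℕ := fun x => if hx : x < n then φ ⟨x, hx⟩ else 0
  have hψ : IsPackingOn s ψ (Set.Ico 0 (0 + 2 ^ k)) := by
    intro x ⟨_, hx⟩ y ⟨_, hy⟩ hxy heq
    simp only [ψ, dif_pos (by omega : x < n), dif_pos (by omega : y < n)] at heq ⊢
    exact isSPackingColoring_pathGraph_iff.mp hφ ⟨x, by omega⟩ ⟨y, by omega⟩ hxy (Fin.ext heq)
  obtain ⟨x, ⟨_, hx⟩, hkx⟩ := hψ.exists_le_of_Ico_two_pow hs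
  simp only [ψ, dif_pos (by omega : x < n)] at hkx
  exact (φ _).isLt.not_ge hkx

theorem stmt9_general (s : ℕ → ℕ)
    (h1 : s 0 = 1) (n : ℕ) (hn : 1 ≤ n)
    (h : ∀ i, 2 ≤ i → i ≤ Nat.log 2 n + 1 →
      2 ^ (i - 1) ≤ s (i - 1) ∧ s (i - 1) < 2 ^ i) :
    SPackingChromatic (pathGraph n) s = Nat.log 2 n + 1 := by
  have hs : ∀ i ≤ Nat.log 2 n, 2 ^ i ≤ s i ∧ s i < 2 ^ (i + 1) := by
    rintro (_ | i) hi
    · simp [h1]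
    · simpa using h (i + 2) (by omega) (by omega)
  have hcol := isSPackingColoring_twoAdicColoring fun i hi => (hs i hi).2
  refine le_antisymm (Nat.sInf_le ⟨_, hcol⟩) (le_csInf ⟨_, _, hcol⟩ ?_)
  rintro k ⟨φ, hφ⟩
  by_contra! hk
  have := Nat.log_lt_of_lt_pow (by omega)
    (hφ.lt_two_pow_of_pathGraph fun j hj => (hs j (by omega)).1)
  omega

theorem stmt9 (s : ℕ → ℕ) (hmono : Monotone s) (hpos : ∀ i, 1 ≤ s i)
    (h1 : s 0 = 1) (n : ℕ) (hn : 1 ≤ n)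
    (h : ∀ i, 2 ≤ i → i ≤ Nat.log 2 n + 1 →
      2 ^ (i - 1) ≤ s (i - 1) ∧ s (i - 1) < 2 ^ i) :
    SPackingChromatic (pathGraph n) s = Nat.log 2 n + 1 :=
  stmt9_general s h1 n hn h
end

section
/- For every packing sequence S and every positive integer n, the path P_n is χ_S-vertex-critical if and only if it is χ_S-critical. -/
open SimpleGraph

/-!
Deleting a vertex `v` of a graph yields the proper subgraph `G - v`, so critical graphs are
vertex-critical. Conversely, a proper subgraph of `P_n` either misses a vertex `v`, and then sits
inside `P_n - v`, or misses an edge `{a, a + 1}`. In the second case it lies in the disjoint union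
`P_{a+1} ∪ P_{n-a-1}`, which folds onto `P_n - 0` by shifting the first component one step to the
right. Graph homomorphisms do not increase distances, and the only identified pair `a, a + 1`
lies in different components, at infinite distance, so `S`-packing colorings pull back along the
fold.
-/

namespace SimpleGraph

variable {V W : Type*} {G : SimpleGraph V} {G' : SimpleGraph W}

theorem edist_map_le (f : G →g G') (u v : V) : G'.edist (f u) (f v) ≤ G.edist u v :=
  le_iInf fun w => by simpa using edist_le (w.map f)

theorem Reachable.iff_of_forall_adj {p : V → Prop} (h : ∀ x y, G.Adj x y → (p x ↔ p y))
    {u v : V} (huv : G.Reachable u v) : p u ↔ p v := by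
  obtain ⟨w⟩ := huv
  induction w with
  | nil => rfl
  | cons hadj _ ih => exact (h _ _ hadj).trans ih

end SimpleGraph

section SPackingChromatic

variable {V W : Type*} {G : SimpleGraph V} {G' : SimpleGraph W} {s : ℕ → ℕ}

theorem isSPackingColoring_of_injective {k : ℕ} {φ : V → Fin k} (hφ : Function.Injective φ) :
    IsSPackingColoring G s φ :=
  fun _ _ huv h => absurd (hφ h) huv

theorem exists_isSPackingColoring_spackingChromatic [Finite V] (G : SimpleGraph V) (s : ℕ → ℕ) :
    ∃ φ : V → Fin (SPackingChromatic G s), IsSPackingColoring G s φ := by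
  have := Fintype.ofFinite V
  exact Nat.sInf_mem (s := {k | ∃ φ : V → Fin k, IsSPackingColoring G s φ})
    ⟨_, Fintype.equivFin V, isSPackingColoring_of_injective (Equiv.injective _)⟩

theorem IsSPackingColoring.comp {k : ℕ} {φ : W → Fin k} (hφ : IsSPackingColoring G' s φ)
    (f : G →g G') (hf : ∀ u v, f u = f v → u ≠ v → ¬ G.Reachable u v) :
    IsSPackingColoring G s (φ ∘ f) := by
  intro u v huv h
  by_cases hfuv : f u = f v
  · rw [edist_eq_top_of_not_reachable (hf u v hfuv huv)]
    exact ENat.natCast_lt_top _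
  · exact (hφ _ _ hfuv h).trans_le (edist_map_le f u v)

theorem spackingChromatic_le_of_hom [Finite W] (f : G →g G')
    (hf : ∀ u v, f u = f v → u ≠ v → ¬ G.Reachable u v) :
    SPackingChromatic G s ≤ SPackingChromatic G' s := by
  obtain ⟨φ, hφ⟩ := exists_isSPackingColoring_spackingChromatic G' s
  exact Nat.sInf_le ⟨φ ∘ f, hφ.comp f hf⟩

theorem spackingChromatic_le_of_injective [Finite W] (f : G →g G') (hf : Function.Injective f) :
    SPackingChromatic G s ≤ SPackingChromatic G' s :=
  spackingChromatic_le_of_hom f fun _ _ h huv => absurd (hf h) huv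

end SPackingChromatic

section Criticality

variable {V : Type*} {G : SimpleGraph V} {s : ℕ → ℕ}

theorem SimpleGraph.Subgraph.coe_top_induce (S : Set V) :
    ((⊤ : G.Subgraph).induce S).coe = G.induce S := by
  ext a b
  exact ⟨fun h => h.2.2, fun h => ⟨a.2, b.2, h⟩⟩

theorem SCritical.sVertexCritical (h : SCritical G s) : SVertexCritical G s := by
  intro v
  have hne : (⊤ : G.Subgraph).induce {u | u ≠ v} ≠ ⊤ := fun htop => by
    simpa using congrArg (v ∈ ·.verts) htop
  have := h _ hne
  rwa [Subgraph.coe_top_induce] at this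

theorem SimpleGraph.Subgraph.exists_notMem_verts_or_exists_not_adj {H : G.Subgraph} (hH : H ≠ ⊤) :
    (∃ v, v ∉ H.verts) ∨ ∃ a b, G.Adj a b ∧ ¬ H.Adj a b := by
  by_contra! h
  exact hH (Subgraph.ext (Set.eq_univ_of_forall h.1) (funext₂ fun a b =>
    propext ⟨fun hab => H.adj_sub hab, h.2 a b⟩))

theorem spackingChromatic_coe_le_induce_ne [Finite V] {H : G.Subgraph} {v : V}
    (hv : v ∉ H.verts) :
    SPackingChromatic H.coe s ≤ SPackingChromatic (G.induce {u | u ≠ v}) s :=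
  spackingChromatic_le_of_injective
    ⟨fun u => ⟨u, fun h => hv (h ▸ u.2)⟩, fun h => H.adj_sub h⟩
    fun _ _ h => Subtype.ext (congrArg (fun u => u.1) h :)

theorem spackingChromatic_coe_le_deleteEdges [Finite V] {H : G.Subgraph} {a b : V}
    (hab : ¬ H.Adj a b) :
    SPackingChromatic H.coe s ≤ SPackingChromatic (G.deleteEdges {s(a, b)}) s := by
  refine spackingChromatic_le_of_injective ⟨Subtype.val, fun {x y} hxy => ?_⟩ Subtype.val_injective
  refine deleteEdges_adj.2 ⟨H.adj_sub hxy, fun hmem => ?_⟩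
  rcases Sym2.eq_iff.1 (Set.mem_singleton_iff.1 hmem) with ⟨rfl, rfl⟩ | ⟨rfl, rfl⟩
  exacts [hab hxy, hab hxy.symm]

end Criticality

section Path

variable {n : ℕ} {s : ℕ → ℕ}

theorem le_iff_le_of_adj_pathGraph_deleteEdges {a b x y : Fin n} (hab : a.val + 1 = b.val)
    (hxy : ((pathGraph n).deleteEdges {s(a, b)}).Adj x y) : x ≤ a ↔ y ≤ a := by
  simp only [deleteEdges_adj, pathGraph_adj, Set.mem_singleton_iff, Sym2.eq_iff, Fin.ext_iff,
    Fin.le_iff_val_le_val] at hxy ⊢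
  omega

theorem spackingChromatic_pathGraph_deleteEdges_le {a b v : Fin n} (hab : a.val + 1 = b.val)
    (hv : v.val = 0) :
    SPackingChromatic ((pathGraph n).deleteEdges {s(a, b)}) s ≤
      SPackingChromatic ((pathGraph n).induce {u | u ≠ v}) s := by
  have hb := b.isLt
  let fold : Fin n → {u : Fin n | u ≠ v} := fun k =>
    if hk : k ≤ a then ⟨⟨k + 1, by omega⟩, by simp [Fin.ext_iff, hv]⟩
    else ⟨k, by
      rw [Fin.not_le, Fin.lt_def] at hk
      rw [Set.mem_ofPred_eq, Ne, Fin.ext_iff]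
      omega⟩
  refine spackingChromatic_le_of_hom ⟨fold, fun {x y} hxy => ?_⟩ fun x y hfold hne hreach => ?_
  · have hside := le_iff_le_of_adj_pathGraph_deleteEdges hab hxy
    simp only [deleteEdges_adj, pathGraph_adj] at hxy
    simp only [comap_adj, Function.Embedding.coe_subtype, pathGraph_adj, fold]
    split_ifs <;> simp_all
  · have hside := hreach.iff_of_forall_adj fun _ _ => le_iff_le_of_adj_pathGraph_deleteEdges hab
    change fold x = fold y at hfold
    simp only [fold] at hfold
    split_ifs at hfold <;> simp_all [Fin.ext_iff]

theorem SVertexCritical.sCritical_pathGraph (h : SVertexCritical (pathGraph n) s) :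
    SCritical (pathGraph n) s := by
  intro H hH
  rcases H.exists_notMem_verts_or_exists_not_adj hH with ⟨v, hv⟩ | ⟨x, y, hxy, hHxy⟩
  · exact (spackingChromatic_coe_le_induce_ne hv).trans_lt (h v)
  obtain ⟨a, b, hab, hHab⟩ : ∃ a b : Fin n, a.val + 1 = b.val ∧ ¬ H.Adj a b := by
    rcases pathGraph_adj.1 hxy with hxy | hyx
    exacts [⟨x, y, hxy, hHxy⟩, ⟨y, x, hyx, fun h => hHxy h.symm⟩]
  calc SPackingChromatic H.coe s
      ≤ SPackingChromatic ((pathGraph n).deleteEdges {s(a, b)}) s :=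
        spackingChromatic_coe_le_deleteEdges hHab
    _ ≤ SPackingChromatic ((pathGraph n).induce {u | u ≠ ⟨0, a.pos⟩}) s :=
        spackingChromatic_pathGraph_deleteEdges_le hab rfl
    _ < SPackingChromatic (pathGraph n) s := h _

end Path

theorem stmt13_general (s : ℕ → ℕ) (n : ℕ) :
    SVertexCritical (pathGraph n) s ↔ SCritical (pathGraph n) s :=
  ⟨SVertexCritical.sCritical_pathGraph, SCritical.sVertexCritical⟩

theorem stmt13 (s : ℕ → ℕ) (hmono : Monotone s) (hpos : ∀ i, 1 ≤ s i)
    (n : ℕ) (hn : 1 ≤ n) :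
    SVertexCritical (pathGraph n) s ↔ SCritical (pathGraph n) s :=
  stmt13_general s n
end
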